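/- arXiv:2212.08360 — 5 statements merged into one kernel-verified Lean document; each statement's English description precedes it below -/
import Mathlib

section
/- Let A, B be 2n×2n real invertible skew-symmetric matrices. Suppose {v₁,...,v_{2n}} is a symplectic basis for A (i.e. vᵢᵀ A v_j equals J_{i,j}) and {w₁,...,w_{2n}} is a symplectic basis for B, and suppose vᵢᵀ J v_j = wᵢᵀ J w_j for all i, j. Then there exists a symplectic matrix P (Pᵀ J P = J) with Pᵀ B P = A. -/
open Matrix

/-- The standard symplectic matrix `J` on `ℝ^{2n}`. -/
def stdJ (n : ℕ) : Matrix (Fin (2 * n)) (Fin (2 * n)) ℝ :=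
  Matrix.of fun i j =>
    if i.val + 1 = j.val ∧ i.val % 2 = 0 then 1
    else if j.val + 1 = i.val ∧ j.val % 2 = 0 then -1
    else 0

/-! With the bases as the rows of `M` and `N`, the hypotheses say `M A Mᵀ = J = N B Nᵀ` and
`M J Mᵀ = N J Nᵀ`. The single change of basis `P = Nᵀ M⁻ᵀ`, sending `v` to `w`, therefore carries
`B` to `A` and `J` to itself at once. -/

namespace Matrix

variable {m R : Type*} [Fintype m] [CommRing R]

theorem of_mul_mul_transpose_of (u : m → m → R) (C : Matrix m m R) :
    of u * C * (of u)ᵀ = of fun i j => u i ⬝ᵥ C *ᵥ u j := by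
  ext i j
  rw [mul_mul_apply, transpose_transpose]
  rfl

theorem transpose_mul_mul_eq_of_mul_mul_transpose_eq [DecidableEq m] {M N A B : Matrix m m R}
    (hM : IsUnit M.det) (h : M * A * Mᵀ = N * B * Nᵀ) :
    (Nᵀ * M⁻¹ᵀ)ᵀ * B * (Nᵀ * M⁻¹ᵀ) = A := by
  have hMt : IsUnit Mᵀ.det := by rwa [det_transpose]
  calc (Nᵀ * M⁻¹ᵀ)ᵀ * B * (Nᵀ * M⁻¹ᵀ) = M⁻¹ * (N * B * Nᵀ) * Mᵀ⁻¹ := by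
        simp only [transpose_mul, transpose_transpose, transpose_nonsing_inv, Matrix.mul_assoc]
    _ = M⁻¹ * (M * A * Mᵀ) * Mᵀ⁻¹ := by rw [h]
    _ = A := by
        rw [Matrix.mul_assoc M, nonsing_inv_mul_cancel_left M _ hM,
          mul_nonsing_inv_cancel_right Mᵀ _ hMt]

end Matrix

theorem equivalence_lemma_general (n : ℕ) (A B : Matrix (Fin (2 * n)) (Fin (2 * n)) ℝ)
    (v w : Fin (2 * n) → Fin (2 * n) → ℝ)
    (hv : LinearIndependent ℝ v)
    (hvA : ∀ i j, v i ⬝ᵥ A *ᵥ v j = stdJ n i j)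
    (hwB : ∀ i j, w i ⬝ᵥ B *ᵥ w j = stdJ n i j)
    (hvals : ∀ i j, v i ⬝ᵥ (stdJ n) *ᵥ v j = w i ⬝ᵥ (stdJ n) *ᵥ w j) :
    ∃ P : Matrix (Fin (2 * n)) (Fin (2 * n)) ℝ,
      Pᵀ * stdJ n * P = stdJ n ∧ Pᵀ * B * P = A := by
  have hM : IsUnit (of v).det :=
    (isUnit_iff_isUnit_det _).1 (linearIndependent_rows_iff_isUnit.1 hv)
  refine ⟨(of w)ᵀ * (of v)⁻¹ᵀ, transpose_mul_mul_eq_of_mul_mul_transpose_eq hM ?_,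
    transpose_mul_mul_eq_of_mul_mul_transpose_eq hM ?_⟩
  · simp only [of_mul_mul_transpose_of, hvals]
  · simp only [of_mul_mul_transpose_of, hvA, hwB]

/-- Equivalence Lemma in `ℝ^{2n}`: if `A` and `B` admit symplectic bases with equal
basis-values, then `A` and `B` are equivalent under the symplectic group action. -/
theorem equivalence_lemma (n : ℕ) (A B : Matrix (Fin (2 * n)) (Fin (2 * n)) ℝ)
    (hA : Aᵀ = -A) (hAdet : A.det ≠ 0) (hB : Bᵀ = -B) (hBdet : B.det ≠ 0)
    (v w : Fin (2 * n) → Fin (2 * n) → ℝ)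
    (hv : LinearIndependent ℝ v) (hv' : Submodule.span ℝ (Set.range v) = ⊤)
    (hw : LinearIndependent ℝ w) (hw' : Submodule.span ℝ (Set.range w) = ⊤)
    (hvA : ∀ i j, v i ⬝ᵥ A *ᵥ v j = stdJ n i j)
    (hwB : ∀ i j, w i ⬝ᵥ B *ᵥ w j = stdJ n i j)
    (hvals : ∀ i j, v i ⬝ᵥ (stdJ n) *ᵥ v j = w i ⬝ᵥ (stdJ n) *ᵥ w j) :
    ∃ P : Matrix (Fin (2 * n)) (Fin (2 * n)) ℝ,
      Pᵀ * stdJ n * P = stdJ n ∧ Pᵀ * B * P = A :=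
  equivalence_lemma_general n A B v w hv hvA hwB hvals
end

section
/- The block-diagonal skew-symmetric matrix A = diag-blocks(a·J₀, (p/a)·J₀) with a ≠ ±√p, p > 0, is symplectically congruent to a matrix whose (1,3)-entry is nonzero. Concretely, with t = a/√p and P the explicit symplectic matrix [[1,0,0,1],[0,1/(1-t²),t²/(1-t²),0],[0,1/(1-t²),1/(1-t²),0],[t²,1,1,1]], P is symplectic and the (1,3)-entry of Pᵀ A P is nonzero. -/
/-! For `u ≠ 1` the columns `c₀ = (1,0,0,u)`, `c₁`, `c₂ = (0, u, 1, 1 - u)/(1 - u)`, `c₃` of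
`mixingMatrix u` form a symplectic basis, and the form `a·J₀ ⊕ b·J₀` pairs `c₀` with `c₂` to
`u (a - b) / (1 - u)`. Taking `u = t² = a²/p` and `b = p/a` gives `-a ≠ 0`. -/

open Matrix

/-- The standard 4×4 symplectic matrix. -/
def J4 : Matrix (Fin 4) (Fin 4) ℝ :=
  !![0, 1, 0, 0; -1, 0, 0, 0; 0, 0, 0, 1; 0, 0, -1, 0]

section

variable {R : Type*} [CommRing R]

def blockSkew (a b : R) : Matrix (Fin 4) (Fin 4) R :=
  !![0, a, 0, 0; -a, 0, 0, 0; 0, 0, 0, b; 0, 0, -b, 0]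

theorem J4_eq_blockSkew : J4 = blockSkew 1 1 := by
  ext i j
  fin_cases i <;> fin_cases j <;> rfl

theorem transpose_mul_blockSkew_mul_apply (a b : R) (P : Matrix (Fin 4) (Fin 4) R) (i j : Fin 4) :
    (Pᵀ * blockSkew a b * P) i j =
      a * (P 0 i * P 1 j - P 1 i * P 0 j) + b * (P 2 i * P 3 j - P 3 i * P 2 j) := by
  simp only [blockSkew, mul_apply, transpose_apply, Fin.sum_univ_four, of_apply, cons_val',
    cons_val_zero, cons_val_one, cons_val_two, cons_val_three, tail_cons,
    empty_val', cons_val_fin_one, vecHead, Fin.isValue]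
  ring

end

section

variable {K : Type*} [Field K]

def mixingMatrix (u : K) : Matrix (Fin 4) (Fin 4) K :=
  !![1, 0, 0, 1;
     0, 1 / (1 - u), u / (1 - u), 0;
     0, 1 / (1 - u), 1 / (1 - u), 0;
     u, 1, 1, 1]

theorem mixingMatrix_symplectic {u : K} (hu : 1 - u ≠ 0) :
    (mixingMatrix u)ᵀ * blockSkew 1 1 * mixingMatrix u = blockSkew 1 1 := by
  ext i j
  rw [transpose_mul_blockSkew_mul_apply]
  fin_cases i <;> fin_cases j <;>
    simp only [mixingMatrix, blockSkew, of_apply, cons_val', cons_val, cons_val_zero, cons_val_one,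
      cons_val_fin_one, Fin.zero_eta, Fin.mk_one, Fin.reduceFinMk, Fin.isValue] <;>
    field_simp <;> ring

theorem mixingMatrix_conj_blockSkew_apply_zero_two (u a b : K) :
    ((mixingMatrix u)ᵀ * blockSkew a b * mixingMatrix u) 0 2 = u * (a - b) / (1 - u) := by
  rw [transpose_mul_blockSkew_mul_apply]
  simp only [mixingMatrix, of_apply, cons_val', cons_val, cons_val_zero, cons_val_one,
    cons_val_fin_one, Fin.isValue]
  ring

end

theorem case5_matrix (p a t : ℝ) (hp : 0 < p) (ha : a ≠ 0) (ha2 : a ^ 2 ≠ p)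
    (ht : t = a / Real.sqrt p)
    (A P : Matrix (Fin 4) (Fin 4) ℝ)
    (hA : A = !![0, a, 0, 0; -a, 0, 0, 0; 0, 0, 0, p / a; 0, 0, -(p / a), 0])
    (hPdef : P = !![1, 0, 0, 1;
                    0, 1 / (1 - t ^ 2), t ^ 2 / (1 - t ^ 2), 0;
                    0, 1 / (1 - t ^ 2), 1 / (1 - t ^ 2), 0;
                    t ^ 2, 1, 1, 1]) :
    Pᵀ * J4 * P = J4 ∧ (Pᵀ * A * P) 0 2 ≠ 0 := by
  have hA_skew : A = blockSkew a (p / a) := hA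
  have hP_mix : P = mixingMatrix (t ^ 2) := hPdef
  have ht2 : t ^ 2 = a ^ 2 / p := by rw [ht, div_pow, Real.sq_sqrt hp.le]
  have hu : 1 - t ^ 2 ≠ 0 := by
    rw [ht2, sub_ne_zero, ne_comm]
    exact div_ne_one_of_ne ha2
  have hab : a - p / a ≠ 0 := by
    rw [sub_ne_zero]
    intro h
    exact ha2 (by field_simp at h; linarith)
  refine ⟨by rw [J4_eq_blockSkew, hP_mix, mixingMatrix_symplectic hu], ?_⟩
  rw [hA_skew, hP_mix, mixingMatrix_conj_blockSkew_apply_zero_two, ht2]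
  have hu0 : a ^ 2 / p ≠ 0 := by positivity
  exact div_ne_zero (mul_ne_zero hu0 hab) (ht2 ▸ hu)
end

section
/- For p, q ∈ ℝ with q²/4 - p > 0 and p ≠ 0, the set {(a,b,c,d,e,f) ∈ ℝ⁶ : af - be + cd = p, a + f = q} is homeomorphic to S² × ℝ². -/
/-!
On the hyperplane `a + f = q` the Pfaffian form splits as
`af - be + cd = q²/4 - ‖x‖² + ‖y‖²` with `x = (a - q/2, (b+e)/2, (c-d)/2) ∈ ℝ³` and
`y = ((b-e)/2, (c+d)/2) ∈ ℝ²`, so the set is the hyperboloid `‖x‖² = Δ + ‖y‖²`, `Δ = q²/4 - p`.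
As `Δ > 0`, the radius `‖x‖ = √(Δ + ‖y‖²)` is a positive continuous function of `y`, and
`(x, y) ↦ (x / ‖x‖, y)` identifies the hyperboloid with `S² × ℝ²`.
-/

open Metric

section NormGraph

variable {E Y : Type*} [NormedAddCommGroup E] [NormedSpace ℝ E] [TopologicalSpace Y]

noncomputable def normGraphHomeomorphSphereProd (r : Y → ℝ) (hr : Continuous r)
    (hr₀ : ∀ y, 0 < r y) : {w : E × Y // ‖w.1‖ = r w.2} ≃ₜ sphere (0 : E) 1 × Y where
  toFun w := (⟨(r w.1.2)⁻¹ • w.1.1, by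
    simp [norm_smul, w.2, abs_of_pos (hr₀ _), (hr₀ _).ne']⟩, w.1.2)
  invFun uy := ⟨(r uy.2 • (uy.1 : E), uy.2), by simp [norm_smul, abs_of_pos (hr₀ _)]⟩
  left_inv w := by ext <;> simp [smul_smul, (hr₀ _).ne']
  right_inv uy := by ext <;> simp [smul_smul, (hr₀ _).ne']
  continuous_toFun := by
    refine .prodMk (.subtype_mk (.smul (.inv₀ ?_ fun w => (hr₀ _).ne') ?_) _) ?_ <;> fun_prop
  continuous_invFun := by
    refine .subtype_mk (.prodMk (.smul ?_ ?_) ?_) _ <;> fun_prop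

end NormGraph

noncomputable def toHyperboloidCoords (q : ℝ) (v : Fin 6 → ℝ) :
    EuclideanSpace ℝ (Fin 3) × (ℝ × ℝ) :=
  (!₂[v 0 - q / 2, (v 1 + v 4) / 2, (v 2 - v 3) / 2], ((v 1 - v 4) / 2, (v 2 + v 3) / 2))

noncomputable def ofHyperboloidCoords (q : ℝ) (w : EuclideanSpace ℝ (Fin 3) × (ℝ × ℝ)) :
    Fin 6 → ℝ :=
  ![q / 2 + w.1 0, w.1 1 + w.2.1, w.2.2 + w.1 2, w.2.2 - w.1 2, w.1 1 - w.2.1, q / 2 - w.1 0]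

lemma continuous_toHyperboloidCoords (q : ℝ) : Continuous (toHyperboloidCoords q) := by
  unfold toHyperboloidCoords; fun_prop

lemma continuous_ofHyperboloidCoords (q : ℝ) : Continuous (ofHyperboloidCoords q) := by
  unfold ofHyperboloidCoords; fun_prop

lemma EuclideanSpace.norm_sq_fin_three (x : EuclideanSpace ℝ (Fin 3)) :
    ‖x‖ ^ 2 = x 0 ^ 2 + x 1 ^ 2 + x 2 ^ 2 := by
  simp [EuclideanSpace.norm_sq_eq, Fin.sum_univ_three]

section
variable (q : ℝ)

lemma pfaffian_eq_of_add_eq {v : Fin 6 → ℝ} (hv : v 0 + v 5 = q) :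
    v 0 * v 5 - v 1 * v 4 + v 2 * v 3 = q ^ 2 / 4 - ‖(toHyperboloidCoords q v).1‖ ^ 2
      + (toHyperboloidCoords q v).2.1 ^ 2 + (toHyperboloidCoords q v).2.2 ^ 2 := by
  simp only [toHyperboloidCoords, EuclideanSpace.norm_sq_fin_three, Matrix.cons_val_zero,
    Matrix.cons_val_one, Matrix.cons_val]
  linear_combination v 0 * hv

lemma pfaffian_ofHyperboloidCoords (w : EuclideanSpace ℝ (Fin 3) × (ℝ × ℝ)) :
    let v := ofHyperboloidCoords q w
    v 0 * v 5 - v 1 * v 4 + v 2 * v 3 = q ^ 2 / 4 - ‖w.1‖ ^ 2 + w.2.1 ^ 2 + w.2.2 ^ 2 := by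
  simp [ofHyperboloidCoords, EuclideanSpace.norm_sq_fin_three]
  ring

lemma ofHyperboloidCoords_add (w : EuclideanSpace ℝ (Fin 3) × (ℝ × ℝ)) :
    ofHyperboloidCoords q w 0 + ofHyperboloidCoords q w 5 = q := by
  simp [ofHyperboloidCoords]

lemma ofHyperboloidCoords_toHyperboloidCoords {v : Fin 6 → ℝ} (hv : v 0 + v 5 = q) :
    ofHyperboloidCoords q (toHyperboloidCoords q v) = v := by
  ext i
  fin_cases i <;> simp [ofHyperboloidCoords, toHyperboloidCoords] <;> linarith

lemma toHyperboloidCoords_ofHyperboloidCoords (w : EuclideanSpace ℝ (Fin 3) × (ℝ × ℝ)) :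
    toHyperboloidCoords q (ofHyperboloidCoords q w) = w := by
  ext i <;> (try fin_cases i) <;> simp [ofHyperboloidCoords, toHyperboloidCoords]

end

noncomputable def orbitHomeomorphHyperboloid (p q : ℝ) :
    {v : Fin 6 → ℝ // v 0 * v 5 - v 1 * v 4 + v 2 * v 3 = p ∧ v 0 + v 5 = q} ≃ₜ
      {w : EuclideanSpace ℝ (Fin 3) × (ℝ × ℝ) //
        ‖w.1‖ ^ 2 = q ^ 2 / 4 - p + w.2.1 ^ 2 + w.2.2 ^ 2} where
  toFun v := ⟨toHyperboloidCoords q v, by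
    obtain ⟨v, hp, hq⟩ := v
    rw [pfaffian_eq_of_add_eq q hq] at hp
    linarith⟩
  invFun w := ⟨ofHyperboloidCoords q w, by
    obtain ⟨w, hw⟩ := w
    refine ⟨?_, ofHyperboloidCoords_add q w⟩
    rw [pfaffian_ofHyperboloidCoords]
    linarith⟩
  left_inv v := Subtype.ext (ofHyperboloidCoords_toHyperboloidCoords q v.2.2)
  right_inv w := Subtype.ext (toHyperboloidCoords_ofHyperboloidCoords q w)
  continuous_toFun := ((continuous_toHyperboloidCoords q).comp continuous_subtype_val).subtype_mk _
  continuous_invFun := ((continuous_ofHyperboloidCoords q).comp continuous_subtype_val).subtype_mk _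

theorem orbit_shape_pos_general (p q : ℝ) (hΔ : 0 < q ^ 2 / 4 - p) :
    Nonempty
      ({v : Fin 6 → ℝ // v 0 * v 5 - v 1 * v 4 + v 2 * v 3 = p ∧ v 0 + v 5 = q} ≃ₜ
        (Metric.sphere (0 : EuclideanSpace ℝ (Fin 3)) 1) × (ℝ × ℝ)) := by
  let r : ℝ × ℝ → ℝ := fun y => √(q ^ 2 / 4 - p + y.1 ^ 2 + y.2 ^ 2)
  have hr₀ : ∀ y, 0 < r y := fun y => Real.sqrt_pos.2 (by positivity)
  have hr : Continuous r := by fun_prop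
  have hyperboloid_iff : ∀ w : EuclideanSpace ℝ (Fin 3) × (ℝ × ℝ),
      ‖w.1‖ ^ 2 = q ^ 2 / 4 - p + w.2.1 ^ 2 + w.2.2 ^ 2 ↔ ‖w.1‖ = r w.2 := fun w => by
    rw [eq_comm (b := r w.2), Real.sqrt_eq_iff_eq_sq (by positivity) (norm_nonneg _), eq_comm]
  exact ⟨(orbitHomeomorphHyperboloid p q).trans <|
    ((Homeomorph.refl _).subtype hyperboloid_iff).trans (normGraphHomeomorphSphereProd r hr hr₀)⟩

theorem orbit_shape_pos (p q : ℝ) (hp : p ≠ 0) (hΔ : 0 < q ^ 2 / 4 - p) :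
    Nonempty
      ({v : Fin 6 → ℝ // v 0 * v 5 - v 1 * v 4 + v 2 * v 3 = p ∧ v 0 + v 5 = q} ≃ₜ
        (Metric.sphere (0 : EuclideanSpace ℝ (Fin 3)) 1) × (ℝ × ℝ)) :=
  orbit_shape_pos_general p q hΔ
end

section
/- For p, q ∈ ℝ with q²/4 - p < 0, the set {(a,b,c,d,e,f) ∈ ℝ⁶ : af - be + cd = p, a + f = q} is homeomorphic to (ℝ² \ {0}) × ℝ². -/
/-!
With `a + f = q`, put `u = (a - f)/2`, `s = (b + e)/2`, `n = (c - d)/2` and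
`y = ((b - e) + (c + d) i)/2 ∈ ℂ`. The equation `af - be + cd = p` becomes
`‖y‖ = r x` with `x = (u, s, n)` and `r x = √(u² + s² + n² + p - q²/4)`, which is continuous and,
as `p - q²/4 > 0`, positive. Hence `(y, x) ↦ (y / r x, x)` identifies the level set with
`S¹ × ℝ × ℝ²`, and polar coordinates `(θ, u) ↦ eᵘ θ` identify `S¹ × ℝ` with `ℂ \ {0}`.
-/

open Metric

section NormedSpace

variable {X F : Type*} [TopologicalSpace X] [NormedAddCommGroup F] [NormedSpace ℝ F]

noncomputable def homeomorphNormEqSphereProd (f : X → ℝ) (hf : Continuous f)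
    (hf_pos : ∀ x, 0 < f x) :
    {p : F × X // ‖p.1‖ = f p.2} ≃ₜ sphere (0 : F) 1 × X where
  toFun p := (⟨(f p.1.2)⁻¹ • p.1.1, by
    simp [norm_smul, p.2, abs_of_pos (hf_pos _), (hf_pos _).ne']⟩, p.1.2)
  invFun p := ⟨(f p.2 • (p.1 : F), p.2), by simp [norm_smul, abs_of_pos (hf_pos _)]⟩
  left_inv p := by
    ext
    · simp [smul_smul, (hf_pos _).ne']
    · rfl
  right_inv p := by
    ext
    · simp [smul_smul, (hf_pos _).ne']
    · rfl
  continuous_toFun := by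
    refine Continuous.prodMk (Continuous.subtype_mk ?_ _) continuous_subtype_val.snd
    exact ((hf.comp continuous_subtype_val.snd).inv₀ fun p => (hf_pos _).ne').smul
      continuous_subtype_val.fst
  continuous_invFun := by
    refine Continuous.subtype_mk ?_ _
    exact ((hf.comp continuous_snd).smul continuous_fst.subtype_val).prodMk continuous_snd

variable (F) in
noncomputable def homeomorphSphereProdReal : sphere (0 : F) 1 × ℝ ≃ₜ ({0}ᶜ : Set F) :=
  ((Homeomorph.refl _).prodCongr Real.expOrderIso.toHomeomorph).trans
    (homeomorphUnitSphereProd F).symm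

end NormedSpace

noncomputable def Complex.homeomorphComplZero : ({0}ᶜ : Set ℂ) ≃ₜ {z : ℝ × ℝ // z ≠ 0} :=
  Complex.equivRealProdCLM.toHomeomorph.subtype fun z => by simp [Complex.ext_iff]

lemma Complex.norm_eq_sqrt_iff {z : ℂ} {g : ℝ} (hg : 0 ≤ g) :
    ‖z‖ = √g ↔ z.re ^ 2 + z.im ^ 2 = g := by
  rw [Complex.norm_eq_sqrt_sq_add_sq, Real.sqrt_inj (by positivity) hg]

lemma levelSet_iff {p q : ℝ} {v : Fin 6 → ℝ} (hq : v 0 + v 5 = q) :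
    v 0 * v 5 - v 1 * v 4 + v 2 * v 3 = p ↔
      ((v 1 - v 4) / 2) ^ 2 + ((v 2 + v 3) / 2) ^ 2 =
        ((v 0 - v 5) / 2) ^ 2 + ((v 1 + v 4) / 2) ^ 2 + ((v 2 - v 3) / 2) ^ 2 +
          (p - q ^ 2 / 4) := by
  subst hq
  constructor <;> intro h <;> linear_combination h

noncomputable def levelCoords (v : Fin 6 → ℝ) : ℂ × ℝ × ℝ × ℝ :=
  (Complex.equivRealProdCLM.symm ((v 1 - v 4) / 2, (v 2 + v 3) / 2),
    (v 0 - v 5) / 2, (v 1 + v 4) / 2, (v 2 - v 3) / 2)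

lemma continuous_levelCoords : Continuous levelCoords := by
  unfold levelCoords
  fun_prop

noncomputable def homeomorphLevelSet (p q : ℝ) (hδ : 0 ≤ p - q ^ 2 / 4) :
    {v : Fin 6 → ℝ // v 0 * v 5 - v 1 * v 4 + v 2 * v 3 = p ∧ v 0 + v 5 = q} ≃ₜ
      {x : ℂ × ℝ × ℝ × ℝ //
        ‖x.1‖ = √(x.2.1 ^ 2 + x.2.2.1 ^ 2 + x.2.2.2 ^ 2 + (p - q ^ 2 / 4))} where
  toFun v := ⟨levelCoords v.1, by
    rw [Complex.norm_eq_sqrt_iff (by positivity)]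
    exact (levelSet_iff v.2.2).1 v.2.1⟩
  invFun x := ⟨![q / 2 + x.1.2.1, x.1.2.2.1 + x.1.1.re, x.1.1.im + x.1.2.2.2,
      x.1.1.im - x.1.2.2.2, x.1.2.2.1 - x.1.1.re, q / 2 - x.1.2.1], by
    have h := (Complex.norm_eq_sqrt_iff (by positivity)).1 x.2
    refine ⟨?_, by simp⟩
    simp only [Matrix.cons_val]
    linear_combination h⟩
  left_inv v := by
    obtain ⟨v, -, hq⟩ := v
    ext i
    fin_cases i <;>
      simp only [levelCoords, Fin.isValue, Complex.equivRealProdCLM_symm_apply_re,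
        Complex.equivRealProdCLM_symm_apply_im, Fin.zero_eta, Fin.mk_one, Fin.reduceFinMk,
        Matrix.cons_val_zero, Matrix.cons_val_one, Matrix.cons_val] <;>
      linarith
  right_inv x := by
    ext <;> simp [levelCoords, Complex.ext_iff]
  continuous_toFun := (continuous_levelCoords.comp continuous_subtype_val).subtype_mk _
  continuous_invFun := Continuous.subtype_mk (by fun_prop) _

theorem orbit_shape_neg_disc (p q : ℝ) (hΔ : q ^ 2 / 4 - p < 0) :
    Nonempty
      ({v : Fin 6 → ℝ // v 0 * v 5 - v 1 * v 4 + v 2 * v 3 = p ∧ v 0 + v 5 = q} ≃ₜ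
        ({z : ℝ × ℝ // z ≠ 0} × (ℝ × ℝ))) := by
  have hδ : 0 < p - q ^ 2 / 4 := by linarith
  have hf : Continuous fun x : ℝ × ℝ × ℝ =>
      √(x.1 ^ 2 + x.2.1 ^ 2 + x.2.2 ^ 2 + (p - q ^ 2 / 4)) := by
    fun_prop
  have hf_pos (x : ℝ × ℝ × ℝ) : 0 < √(x.1 ^ 2 + x.2.1 ^ 2 + x.2.2 ^ 2 + (p - q ^ 2 / 4)) :=
    Real.sqrt_pos.2 (by positivity)
  exact ⟨(homeomorphLevelSet p q hδ.le).trans <|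
    (homeomorphNormEqSphereProd _ hf hf_pos).trans <|
    (Homeomorph.prodAssoc _ _ _).symm.trans <|
    (homeomorphSphereProdReal ℂ).trans Complex.homeomorphComplZero |>.prodCongr (Homeomorph.refl _)⟩
end

section
/- For Δ ∈ ℝ with Δ > 0, the map f : D² × ℝ² → D_Δ given by f(x,y,z,w) = (x√(z²+w²+Δ)+z, w+y√(z²+w²+Δ), w−y√(z²+w²+Δ), x√(z²+w²+Δ)−z) is a homeomorphism, where D² is the closed unit disk and D_Δ = {(b,c,d,e) ∈ ℝ⁴ : be − cd ≤ Δ}. -/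
/-!
Write a point of `ℝ⁴` as `v = (u₁ + z₁, z₂ + u₂, z₂ - u₂, u₁ - z₁)`; this is a linear change of
coordinates in which `v₀ v₃ - v₁ v₂ = |u|² - |z|²`. The map is `u = r(z) x` with
`r(z) = √(|z|² + Δ) > 0`, so `v₀ v₃ - v₁ v₂ = r(z)² |x|² - |z|² ≤ Δ` exactly when `|x| ≤ 1`,
and its inverse is `z = z(v)`, `x = u(v) / r(z(v))`.
-/

namespace DiskHomeomorphism

variable {Δ : ℝ}

noncomputable def radius (Δ : ℝ) (z : ℝ × ℝ) : ℝ := √(z.1 ^ 2 + z.2 ^ 2 + Δ)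

lemma radius_pos (hΔ : 0 < Δ) (z : ℝ × ℝ) : 0 < radius Δ z :=
  Real.sqrt_pos.2 (by positivity)

lemma radius_sq (hΔ : 0 ≤ Δ) (z : ℝ × ℝ) : radius Δ z ^ 2 = z.1 ^ 2 + z.2 ^ 2 + Δ :=
  Real.sq_sqrt (by positivity)

@[fun_prop]
lemma continuous_radius : Continuous (radius Δ) := by
  unfold radius
  fun_prop

noncomputable def zCoord (v : Fin 4 → ℝ) : ℝ × ℝ := ((v 0 - v 3) / 2, (v 1 + v 2) / 2)

noncomputable def uCoord (v : Fin 4 → ℝ) : ℝ × ℝ := ((v 0 + v 3) / 2, (v 1 - v 2) / 2)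

@[fun_prop]
lemma continuous_zCoord : Continuous zCoord := by
  unfold zCoord
  fun_prop

@[fun_prop]
lemma continuous_uCoord : Continuous uCoord := by
  unfold uCoord
  fun_prop

lemma det_eq_uCoord_sub_zCoord (v : Fin 4 → ℝ) :
    v 0 * v 3 - v 1 * v 2 =
      (uCoord v).1 ^ 2 + (uCoord v).2 ^ 2 - ((zCoord v).1 ^ 2 + (zCoord v).2 ^ 2) := by
  simp only [uCoord, zCoord]
  ring

lemma eq_of_uCoord_eq_of_zCoord_eq {v w : Fin 4 → ℝ} (hu : uCoord v = uCoord w)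
    (hz : zCoord v = zCoord w) : v = w := by
  simp only [uCoord, zCoord, Prod.mk.injEq] at hu hz
  funext i
  fin_cases i <;> simp <;> linarith [hu.1, hu.2, hz.1, hz.2]

noncomputable def toVec (Δ : ℝ) (x z : ℝ × ℝ) : Fin 4 → ℝ :=
  ![x.1 * radius Δ z + z.1, z.2 + x.2 * radius Δ z, z.2 - x.2 * radius Δ z,
    x.1 * radius Δ z - z.1]

lemma zCoord_toVec (x z : ℝ × ℝ) : zCoord (toVec Δ x z) = z := by
  ext <;> simp [zCoord, toVec]

lemma uCoord_toVec (x z : ℝ × ℝ) :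
    uCoord (toVec Δ x z) = (x.1 * radius Δ z, x.2 * radius Δ z) := by
  ext <;> simp [uCoord, toVec]

lemma det_toVec_le (hΔ : 0 < Δ) {x : ℝ × ℝ} (hx : x.1 ^ 2 + x.2 ^ 2 ≤ 1) (z : ℝ × ℝ) :
    toVec Δ x z 0 * toVec Δ x z 3 - toVec Δ x z 1 * toVec Δ x z 2 ≤ Δ := by
  rw [det_eq_uCoord_sub_zCoord, zCoord_toVec, uCoord_toVec]
  have hr := radius_sq hΔ.le z
  nlinarith [sq_nonneg z.1, sq_nonneg z.2]

noncomputable def diskCoord (Δ : ℝ) (v : Fin 4 → ℝ) : ℝ × ℝ :=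
  ((uCoord v).1 / radius Δ (zCoord v), (uCoord v).2 / radius Δ (zCoord v))

lemma diskCoord_mem (hΔ : 0 < Δ) {v : Fin 4 → ℝ} (hv : v 0 * v 3 - v 1 * v 2 ≤ Δ) :
    (diskCoord Δ v).1 ^ 2 + (diskCoord Δ v).2 ^ 2 ≤ 1 := by
  have hr := radius_pos hΔ (zCoord v)
  rw [diskCoord, div_pow, div_pow, ← add_div, div_le_one (by positivity),
    radius_sq hΔ.le]
  linarith [det_eq_uCoord_sub_zCoord v]

lemma diskCoord_toVec (hΔ : 0 < Δ) (x z : ℝ × ℝ) : diskCoord Δ (toVec Δ x z) = x := by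
  have hr := (radius_pos hΔ z).ne'
  ext <;> simp [diskCoord, zCoord_toVec, uCoord_toVec, hr]

lemma toVec_diskCoord (hΔ : 0 < Δ) (v : Fin 4 → ℝ) :
    toVec Δ (diskCoord Δ v) (zCoord v) = v := by
  have hr := (radius_pos hΔ (zCoord v)).ne'
  refine eq_of_uCoord_eq_of_zCoord_eq ?_ (zCoord_toVec _ _)
  rw [uCoord_toVec, diskCoord, div_mul_cancel₀ _ hr, div_mul_cancel₀ _ hr]

@[fun_prop]
lemma continuous_toVec : Continuous fun p : (ℝ × ℝ) × (ℝ × ℝ) => toVec Δ p.1 p.2 := by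
  unfold toVec
  fun_prop

lemma continuous_diskCoord (hΔ : 0 < Δ) : Continuous (diskCoord Δ) := by
  unfold diskCoord
  fun_prop (disch := exact fun v => (radius_pos hΔ _).ne')

noncomputable def homeomorph (hΔ : 0 < Δ) :
    ({x : ℝ × ℝ // x.1 ^ 2 + x.2 ^ 2 ≤ 1} × (ℝ × ℝ)) ≃ₜ
      {v : Fin 4 → ℝ // v 0 * v 3 - v 1 * v 2 ≤ Δ} where
  toFun p := ⟨toVec Δ p.1 p.2, det_toVec_le hΔ p.1.2 p.2⟩
  invFun v := (⟨diskCoord Δ v, diskCoord_mem hΔ v.2⟩, zCoord v)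
  left_inv p := by
    ext <;> simp only [diskCoord_toVec hΔ, zCoord_toVec]
  right_inv v := Subtype.ext (toVec_diskCoord hΔ v)
  continuous_toFun := by fun_prop
  continuous_invFun :=
    (((continuous_diskCoord hΔ).comp continuous_subtype_val).subtype_mk _).prodMk
      (continuous_zCoord.comp continuous_subtype_val)

end DiskHomeomorphism

theorem disk_homeomorphism (Δ : ℝ) (hΔ : 0 < Δ) :
    ∃ e : ({x : ℝ × ℝ // x.1 ^ 2 + x.2 ^ 2 ≤ 1} × (ℝ × ℝ)) ≃ₜ
        {v : Fin 4 → ℝ // v 0 * v 3 - v 1 * v 2 ≤ Δ},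
      ∀ (x : {x : ℝ × ℝ // x.1 ^ 2 + x.2 ^ 2 ≤ 1}) (z : ℝ × ℝ),
        (e (x, z) : Fin 4 → ℝ) =
          ![x.1.1 * Real.sqrt (z.1 ^ 2 + z.2 ^ 2 + Δ) + z.1,
            z.2 + x.1.2 * Real.sqrt (z.1 ^ 2 + z.2 ^ 2 + Δ),
            z.2 - x.1.2 * Real.sqrt (z.1 ^ 2 + z.2 ^ 2 + Δ),
            x.1.1 * Real.sqrt (z.1 ^ 2 + z.2 ^ 2 + Δ) - z.1] :=
  ⟨DiskHomeomorphism.homeomorph hΔ, fun _ _ => rfl⟩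
end
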